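/- arXiv:2103.05960 — 4 statements merged into one kernel-verified Lean document; each statement's English description precedes it below -/
import Mathlib

section
/- For integers g ≥ 2 and 2 ≤ k ≤ 2g, cot(π/(4g))·sin(kπ/(4g)) ≥ cot(π/(4g))·sin(π/(2g)), and cot(π/(4g))·sin(π/(2g)) ≥ √(1 + cos(π/(2g))). -/
open Real

theorem two_separated_segment_bound (g : ℕ) (hg : 2 ≤ g) :
    (∀ k : ℕ, 2 ≤ k → k ≤ 2 * g →
      (Real.cos (π / (4 * g)) / Real.sin (π / (4 * g))) * Real.sin (k * π / (4 * g))
        ≥ (Real.cos (π / (4 * g)) / Real.sin (π / (4 * g))) * Real.sin (π / (2 * g))) ∧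
    (Real.cos (π / (4 * g)) / Real.sin (π / (4 * g))) * Real.sin (π / (2 * g))
      ≥ Real.sqrt (1 + Real.cos (π / (2 * g))) := by
  have hg1 : (2:ℝ) ≤ (g:ℝ) := by exact_mod_cast hg
  have hgpos : (0:ℝ) < g := by linarith
  have hpi := Real.pi_pos
  have hθpos : 0 < π / (4 * g) := by positivity
  have hθle : π / (4 * g) ≤ π / 8 := by
    apply div_le_div_of_nonneg_left (le_of_lt hpi) (by norm_num) (by linarith)
  have h2θ : π / (2 * g) = 2 * (π / (4 * g)) := by
    field_simp; ring
  have hsin : 0 < Real.sin (π / (4 * g)) :=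
    Real.sin_pos_of_pos_of_lt_pi hθpos (by linarith)
  have hcos : 0 < Real.cos (π / (4 * g)) :=
    Real.cos_pos_of_mem_Ioo ⟨by linarith, by linarith⟩
  have hcot : 0 ≤ Real.cos (π / (4 * g)) / Real.sin (π / (4 * g)) :=
    le_of_lt (div_pos hcos hsin)
  constructor
  · intro k hk2 hk
    have hk2' : (2:ℝ) ≤ (k:ℝ) := by exact_mod_cast hk2
    have hk' : (k:ℝ) ≤ 2 * g := by exact_mod_cast hk
    apply mul_le_mul_of_nonneg_left _ hcot
    rw [h2θ]
    have hkub : (k:ℝ) * π / (4 * g) ≤ π / 2 := by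
      rw [div_le_div_iff₀ (by linarith) (by norm_num)]
      nlinarith
    apply Real.strictMonoOn_sin.monotoneOn
    · constructor <;> [linarith; linarith]
    · constructor
      · have : 0 ≤ (k:ℝ) * π / (4 * g) := by positivity
        linarith
      · exact hkub
    · calc 2 * (π / (4 * (g:ℝ))) ≤ (k:ℝ) * (π / (4 * g)) := by gcongr
        _ = (k:ℝ) * π / (4 * g) := by ring
  · rw [h2θ, Real.sin_two_mul]
    have key : Real.cos (π / (4 * g)) / Real.sin (π / (4 * g)) *
        (2 * Real.sin (π / (4 * g)) * Real.cos (π / (4 * g)))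
        = 1 + Real.cos (2 * (π / (4 * g))) := by
      rw [Real.cos_two_mul]
      field_simp
      ring
    rw [key]
    have hc2 : 0 ≤ Real.cos (2 * (π / (4 * g))) :=
      Real.cos_nonneg_of_mem_Icc ⟨by linarith, by linarith⟩
    have hs0 : (0:ℝ) ≤ 1 + Real.cos (2 * (π / (4 * g))) := by linarith
    have hsq := Real.sq_sqrt hs0
    nlinarith [sq_nonneg (Real.sqrt (1 + Real.cos (2 * (π / (4 * g)))) - 1),
      Real.sqrt_nonneg (1 + Real.cos (2 * (π / (4 * g))))]
end

section
/- Let R > 0 and let T be a hyperbolic triangle inscribed in a circle of radius R in the hyperbolic plane, with central angles θ₁, θ₂, θ₃ > 0 summing to π (doubled: 2θⱼ sum to 2π) and half-angles αⱼ at the vertices satisfying cosh R = cot θⱼ · cot αⱼ. Then the area π − 2(α₁+α₂+α₃) is maximized exactly when θ₁ = θ₂ = θ₃ = π/3, giving area at most π − 6·arcot(√3·cosh R). -/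
open Real

/-- `arcot x = arctan (1/x)` for `x > 0`. -/
noncomputable def arcot (x : ℝ) : ℝ := Real.arctan (1 / x)

noncomputable def gfun (c θ : ℝ) : ℝ := Real.arctan (Real.cos θ / (c * Real.sin θ))

lemma denom_pos {c : ℝ} (hc : 1 < c) (t : ℝ) : 0 < 1 + (c ^ 2 - 1) * t ^ 2 := by
  have h : 0 < c ^ 2 - 1 := by nlinarith
  nlinarith [mul_nonneg h.le (sq_nonneg t)]

lemma arcot_eq_gfun {c θ : ℝ} (hc : 0 < c) (h1 : 0 < θ) (h2 : θ < π) :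
    arcot (c * Real.tan θ) = gfun c θ := by
  have hs : 0 < Real.sin θ := Real.sin_pos_of_pos_of_lt_pi h1 h2
  unfold arcot gfun
  rw [Real.tan_eq_sin_div_cos]
  by_cases hcos : Real.cos θ = 0
  · simp [hcos]
  · congr 1
    field_simp

lemma gfun_pi_div_three {c : ℝ} (hc : 0 < c) :
    gfun c (π / 3) = arcot (Real.sqrt 3 * c) := by
  have h3 : (0:ℝ) < Real.sqrt 3 := Real.sqrt_pos.2 (by norm_num)
  have h3' : Real.sqrt 3 * Real.sqrt 3 = 3 := Real.mul_self_sqrt (by norm_num)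
  unfold arcot gfun
  rw [Real.cos_pi_div_three, Real.sin_pi_div_three]
  congr 1
  rw [div_eq_div_iff (by positivity) (by positivity)]
  nlinarith [h3']

lemma hasDerivAt_gfun {c θ : ℝ} (hc : 1 < c) (h1 : 0 < θ) (h2 : θ < π) :
    HasDerivAt (gfun c) (-c / (1 + (c ^ 2 - 1) * Real.sin θ ^ 2)) θ := by
  have hs : 0 < Real.sin θ := Real.sin_pos_of_pos_of_lt_pi h1 h2
  have hc0 : (0:ℝ) < c := lt_trans one_pos hc
  have hden : c * Real.sin θ ≠ 0 := by positivity
  have hu : HasDerivAt (fun x => Real.cos x / (c * Real.sin x))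
      ((-Real.sin θ * (c * Real.sin θ) - Real.cos θ * (c * Real.cos θ)) / (c * Real.sin θ) ^ 2) θ :=
    (Real.hasDerivAt_cos θ).div ((Real.hasDerivAt_sin θ).const_mul c) hden
  have harc := (Real.hasDerivAt_arctan (Real.cos θ / (c * Real.sin θ))).comp θ hu
  refine (harc : HasDerivAt (gfun c) _ θ).congr_deriv (Eq.symm ?_)
  have hpy : Real.sin θ ^ 2 + Real.cos θ ^ 2 = 1 := Real.sin_sq_add_cos_sq θ
  have hD := denom_pos hc (Real.sin θ)
  field_simp
  linear_combination (c ^ 2 * Real.sin θ ^ 2 - Real.sin θ ^ 2) * hpy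

lemma sin_lt_sin' {x y : ℝ} (hx : 0 < x) (hxy : x < y) (hsum : x + y < π) :
    Real.sin x < Real.sin y := by
  rcases le_or_gt y (π / 2) with hy | hy
  · exact Real.sin_lt_sin_of_lt_of_le_pi_div_two (by linarith [Real.pi_pos]) hy hxy
  · have : Real.sin y = Real.sin (π - y) := (Real.sin_pi_sub y).symm
    rw [this]
    exact Real.sin_lt_sin_of_lt_of_le_pi_div_two (by linarith [Real.pi_pos]) (by linarith)
      (by linarith)

/-- Comparison of the derivative values. -/
lemma Gcomp {c x y : ℝ} (hc : 1 < c) (hx : 0 < x) (hxpi : x < π)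
    (hsin : Real.sin x < Real.sin y) :
    -c / (1 + (c ^ 2 - 1) * Real.sin x ^ 2) < -c / (1 + (c ^ 2 - 1) * Real.sin y ^ 2) := by
  have hc0 : (0:ℝ) < c := lt_trans one_pos hc
  have hsx : 0 < Real.sin x := Real.sin_pos_of_pos_of_lt_pi hx hxpi
  have hA := denom_pos hc (Real.sin x)
  have hk : 0 < c ^ 2 - 1 := by nlinarith
  have hsq : Real.sin x ^ 2 < Real.sin y ^ 2 := by nlinarith
  have hlt : 1 + (c ^ 2 - 1) * Real.sin x ^ 2 < 1 + (c ^ 2 - 1) * Real.sin y ^ 2 := by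
    nlinarith [mul_lt_mul_of_pos_left hsq hk]
  have := div_lt_div_of_pos_left hc0 hA hlt
  rw [neg_div, neg_div]
  linarith

lemma pair_lt {c a b : ℝ} (hc : 1 < c) (ha : 0 < a) (hab : a < b) (hs : a + b < π) :
    2 * gfun c ((a + b) / 2) < gfun c a + gfun c b := by
  have hpi : 0 < π := Real.pi_pos
  set s := a + b with hsdef
  have hsc : 0 < s := by linarith
  have anti : StrictAntiOn (fun x => gfun c x + gfun c (s - x)) (Set.Icc a (s / 2)) := by
    have mem : ∀ x ∈ Set.Icc a (s / 2), (0 < x ∧ x < π) ∧ (0 < s - x ∧ s - x < π) := by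
      intro x hx
      obtain ⟨hx1, hx2⟩ := hx
      exact ⟨⟨by linarith, by linarith⟩, ⟨by linarith, by linarith⟩⟩
    have hderiv : ∀ x, (0 < x ∧ x < π) → (0 < s - x ∧ s - x < π) →
        HasDerivAt (fun x => gfun c x + gfun c (s - x))
          ((-c / (1 + (c ^ 2 - 1) * Real.sin x ^ 2)) +
            (-c / (1 + (c ^ 2 - 1) * Real.sin (s - x) ^ 2)) * (-1)) x := by
      intro x hx hsx
      have h1 := hasDerivAt_gfun hc hx.1 hx.2
      have hinner : HasDerivAt (fun y : ℝ => s - y) (-1) x := by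
        simpa using (hasDerivAt_id x).const_sub s
      have h2 := HasDerivAt.comp x (hasDerivAt_gfun hc hsx.1 hsx.2) hinner
      exact h1.add h2
    apply strictAntiOn_of_deriv_neg (convex_Icc _ _)
    · intro x hx
      obtain ⟨h1, h2⟩ := mem x hx
      exact ((hderiv x h1 h2).continuousAt).continuousWithinAt
    · intro x hx
      rw [interior_Icc] at hx
      obtain ⟨h1, h2⟩ := mem x (Set.mem_Icc.2 ⟨le_of_lt hx.1, le_of_lt hx.2⟩)
      rw [(hderiv x h1 h2).deriv]
      have hsin : Real.sin x < Real.sin (s - x) :=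
        sin_lt_sin' h1.1 (by linarith [hx.2]) (by linarith)
      have := Gcomp hc h1.1 h1.2 hsin
      linarith
  have h1 : a ∈ Set.Icc a (s / 2) := ⟨le_refl _, by linarith⟩
  have h2 : s / 2 ∈ Set.Icc a (s / 2) := ⟨by linarith, le_refl _⟩
  have key := anti h1 h2 (by linarith)
  simp only at key
  have e1 : s - s / 2 = s / 2 := by ring
  have e2 : s - a = b := by rw [hsdef]; ring
  rw [e1, e2] at key
  linarith

lemma psi_lt {c u : ℝ} (hc : 1 < c) (hu1 : 0 < u) (hu2 : u < π / 2) (hne : u ≠ π / 3) :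
    3 * gfun c (π / 3) < 2 * gfun c u + gfun c (π - 2 * u) := by
  have hpi : 0 < π := Real.pi_pos
  set ψ : ℝ → ℝ := fun x => 2 * gfun c x + gfun c (π - 2 * x) with hψ
  have hderiv : ∀ x, 0 < x → x < π / 2 →
      HasDerivAt ψ
        (2 * (-c / (1 + (c ^ 2 - 1) * Real.sin x ^ 2)) +
          (-c / (1 + (c ^ 2 - 1) * Real.sin (π - 2 * x) ^ 2)) * (-2)) x := by
    intro x hx1 hx2
    have hin1 : (0:ℝ) < π - 2 * x := by linarith
    have hin2 : π - 2 * x < π := by linarith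
    have h1 := (hasDerivAt_gfun hc hx1 (by linarith)).const_mul 2
    have hinner : HasDerivAt (fun y : ℝ => π - 2 * y) (-2) x := by
      simpa using ((hasDerivAt_id x).const_mul (2:ℝ)).const_sub π
    have h2 := HasDerivAt.comp x (hasDerivAt_gfun hc hin1 hin2) hinner
    exact h1.add h2
  have hψ3 : ψ (π / 3) = 3 * gfun c (π / 3) := by
    have e : π - 2 * (π / 3) = π / 3 := by ring
    rw [hψ]; simp only [e]; ring
  rcases lt_or_gt_of_ne hne with h | h
  · have anti : StrictAntiOn ψ (Set.Icc u (π / 3)) := by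
      apply strictAntiOn_of_deriv_neg (convex_Icc _ _)
      · intro x hx
        exact ((hderiv x (by linarith [hx.1]) (by linarith [hx.2])).continuousAt).continuousWithinAt
      · intro x hx
        rw [interior_Icc] at hx
        have hx1 : 0 < x := by linarith [hx.1]
        have hx2 : x < π / 3 := hx.2
        rw [(hderiv x hx1 (by linarith)).deriv]
        have hsin : Real.sin x < Real.sin (π - 2 * x) :=
          sin_lt_sin' hx1 (by linarith) (by linarith)
        have := Gcomp hc hx1 (by linarith) hsin
        linarith
    have := anti ⟨le_refl _, by linarith⟩ ⟨by linarith, le_refl _⟩ h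
    rw [hψ3] at this
    exact this
  · have mono : StrictMonoOn ψ (Set.Icc (π / 3) u) := by
      apply strictMonoOn_of_deriv_pos (convex_Icc _ _)
      · intro x hx
        exact ((hderiv x (by linarith [hx.1]) (by linarith [hx.2])).continuousAt).continuousWithinAt
      · intro x hx
        rw [interior_Icc] at hx
        have hx1 : π / 3 < x := hx.1
        have hx2 : x < u := hx.2
        rw [(hderiv x (by linarith) (by linarith)).deriv]
        have hsin : Real.sin (π - 2 * x) < Real.sin x :=
          sin_lt_sin' (by linarith) (by linarith) (by linarith)
        have := Gcomp hc (by linarith : (0:ℝ) < π - 2 * x) (by linarith) hsin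
        linarith
    have := mono ⟨le_refl _, by linarith⟩ ⟨by linarith, le_refl _⟩ h
    rw [hψ3] at this
    exact this

lemma psi_ge {c u : ℝ} (hc : 1 < c) (hu1 : 0 < u) (hu2 : u < π / 2) :
    3 * gfun c (π / 3) ≤ 2 * gfun c u + gfun c (π - 2 * u) := by
  by_cases hne : u = π / 3
  · subst hne
    have e : π - 2 * (π / 3) = π / 3 := by ring
    rw [e]; linarith
  · exact le_of_lt (psi_lt hc hu1 hu2 hne)

lemma combo_aux {c x y z : ℝ} (hc : 1 < c) (hx : x ∈ Set.Ioo 0 π) (hy : y ∈ Set.Ioo 0 π)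
    (hz : z ∈ Set.Ioo 0 π) (hsum : x + y + z = π) (hxy : x < y) :
    3 * gfun c (π / 3) < gfun c x + gfun c y + gfun c z := by
  obtain ⟨hx1, hx2⟩ := hx; obtain ⟨hy1, hy2⟩ := hy; obtain ⟨hz1, hz2⟩ := hz
  have hpair := pair_lt hc hx1 hxy (by linarith)
  set m := (x + y) / 2 with hm
  have hm1 : 0 < m := by rw [hm]; linarith
  have hm2 : m < π / 2 := by rw [hm]; linarith
  have hzm : z = π - 2 * m := by rw [hm]; linarith
  have := psi_ge hc hm1 hm2
  rw [← hzm] at this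
  linarith

lemma combo {c x y z : ℝ} (hc : 1 < c) (hx : x ∈ Set.Ioo 0 π) (hy : y ∈ Set.Ioo 0 π)
    (hz : z ∈ Set.Ioo 0 π) (hsum : x + y + z = π) (hxy : x ≠ y) :
    3 * gfun c (π / 3) < gfun c x + gfun c y + gfun c z := by
  rcases lt_or_gt_of_ne hxy with h | h
  · exact combo_aux hc hx hy hz hsum h
  · have := combo_aux hc hy hx hz (by linarith) h
    linarith

theorem inscribed_triangle_max_area (c : ℝ) (hc : 1 < c)
    (a b d : ℝ) (ha : a ∈ Set.Ioo 0 π) (hb : b ∈ Set.Ioo 0 π) (hd : d ∈ Set.Ioo 0 π)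
    (hsum : a + b + d = π) :
    arcot (c * Real.tan a) + arcot (c * Real.tan b) + arcot (c * Real.tan d)
        ≥ 3 * arcot (Real.sqrt 3 * c) ∧
    (arcot (c * Real.tan a) + arcot (c * Real.tan b) + arcot (c * Real.tan d)
          = 3 * arcot (Real.sqrt 3 * c)
      ↔ a = π / 3 ∧ b = π / 3 ∧ d = π / 3) := by
  have hc0 : (0:ℝ) < c := lt_trans one_pos hc
  rw [arcot_eq_gfun hc0 ha.1 ha.2, arcot_eq_gfun hc0 hb.1 hb.2, arcot_eq_gfun hc0 hd.1 hd.2,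
    ← gfun_pi_div_three hc0]
  by_cases h : a = π / 3 ∧ b = π / 3 ∧ d = π / 3
  · obtain ⟨h1, h2, h3⟩ := h
    subst h1; subst h2; subst h3
    refine ⟨by linarith, fun _ => ⟨rfl, rfl, rfl⟩, fun _ => by ring⟩
  · have strict : 3 * gfun c (π / 3) < gfun c a + gfun c b + gfun c d := by
      by_cases hab : a = b
      · by_cases hbd : b = d
        · exfalso
          apply h
          have h1 : a = π / 3 := by rw [hab, hbd] at hsum; rw [hab, hbd]; linarith
          exact ⟨h1, by rw [← hab]; exact h1, by rw [← hbd, ← hab]; exact h1⟩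
        · have := combo hc hb hd ha (by linarith) hbd
          linarith
      · have := combo hc ha hb hd hsum hab
        linarith
    exact ⟨le_of_lt strict, fun he => absurd (by linarith) (ne_of_gt strict),
      fun h' => absurd h' h⟩
end

section
/- As x → 0⁺, the quantity π/(π − 6·arcot(√3·cosh(x/4))) − 1 is asymptotic to 64π/(3√3·x²); in particular, lim_{x→0⁺} x²·(π/(π − 6 arcot(√3 cosh(x/4))) − 1) = 64π/(3√3). -/
open Real Filter

noncomputable def Dfun (t : ℝ) : ℝ := π - 6 * Real.arctan ((Real.sqrt 3 * Real.cosh t)⁻¹)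

lemma arctan_inv_sqrt3 : Real.arctan (Real.sqrt 3)⁻¹ = π / 6 := by
  rw [← one_div, ← Real.tan_pi_div_six, Real.arctan_tan] <;> nlinarith [Real.pi_pos]

lemma Dfun_zero : Dfun 0 = 0 := by
  simp [Dfun, Real.cosh_zero, arctan_inv_sqrt3]
  ring

lemma hasDerivAt_Dfun (t : ℝ) :
    HasDerivAt Dfun (6 * Real.sqrt 3 * Real.sinh t / (3 * Real.cosh t ^ 2 + 1)) t := by
  have hc : (0:ℝ) < Real.cosh t := Real.cosh_pos t
  have hs3 : (0:ℝ) < Real.sqrt 3 := Real.sqrt_pos.mpr (by norm_num)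
  have h3sq : Real.sqrt 3 ^ 2 = 3 := Real.sq_sqrt (by norm_num)
  have h1 : HasDerivAt (fun t => Real.sqrt 3 * Real.cosh t) (Real.sqrt 3 * Real.sinh t) t :=
    (Real.hasDerivAt_cosh t).const_mul _
  have h2 := h1.inv (by positivity)
  have h3 := (Real.hasDerivAt_arctan ((Real.sqrt 3 * Real.cosh t)⁻¹)).comp t h2
  have h4 := ((h3.const_mul (6:ℝ)).const_sub π)
  refine HasDerivAt.congr_deriv (f := Dfun) h4 ?_
  have hne : 3 * Real.cosh t ^ 2 + 1 ≠ 0 := by positivity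
  field_simp
  simp only [mul_pow, h3sq]
  ring

lemma Dfun_pos {t : ℝ} (ht : 0 < t) : 0 < Dfun t := by
  have hs3 : (0:ℝ) < Real.sqrt 3 := Real.sqrt_pos.mpr (by norm_num)
  have hc : 1 < Real.cosh t := (Real.one_lt_cosh).mpr (ne_of_gt ht)
  have h1 : (Real.sqrt 3 * Real.cosh t)⁻¹ < (Real.sqrt 3)⁻¹ := by
    apply inv_strictAnti₀ hs3
    nlinarith
  have h2 := Real.arctan_strictMono h1
  rw [arctan_inv_sqrt3] at h2
  simp only [Dfun]
  linarith

lemma x2tendsto : Tendsto (fun t : ℝ => t ^ 2) (nhdsWithin 0 (Set.Ioi 0)) (nhds 0) := by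
  have := ((continuous_pow 2).tendsto (0:ℝ)).mono_left (nhdsWithin_le_nhds (s := Set.Ioi (0:ℝ)))
  simpa using this

lemma key : Tendsto (fun t : ℝ => t ^ 2 / Dfun t) (nhdsWithin 0 (Set.Ioi 0))
    (nhds (4 / (3 * Real.sqrt 3))) := by
  have hs3 : (0:ℝ) < Real.sqrt 3 := Real.sqrt_pos.mpr (by norm_num)
  apply HasDerivAt.lhopital_zero_nhdsGT
    (f' := fun t : ℝ => 2 * t)
    (g' := fun t : ℝ => 6 * Real.sqrt 3 * Real.sinh t / (3 * Real.cosh t ^ 2 + 1))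
  · filter_upwards with t
    have := hasDerivAt_pow 2 t
    simpa using this
  · filter_upwards with t
    exact hasDerivAt_Dfun t
  · filter_upwards [self_mem_nhdsWithin] with t ht
    have hst : 0 < Real.sinh t := Real.sinh_pos_iff.mpr ht
    have : 0 < 3 * Real.cosh t ^ 2 + 1 := by positivity
    positivity
  · exact x2tendsto
  · have := (hasDerivAt_Dfun 0).continuousAt.tendsto.mono_left (nhdsWithin_le_nhds (s := Set.Ioi (0:ℝ)))
    rwa [Dfun_zero] at this
  · -- derivative quotient tends to 4/(3√3)
    have hsl : Tendsto (fun t : ℝ => Real.sinh t / t) (nhdsWithin 0 (Set.Ioi 0)) (nhds 1) := by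
      have h := Real.hasDerivAt_sinh 0
      rw [hasDerivAt_iff_tendsto_slope] at h
      have h2 := h.mono_left (nhdsWithin_mono 0 (fun x hx => ne_of_gt hx))
      rw [Real.cosh_zero] at h2
      refine h2.congr' ?_ |>.mono_left le_rfl
      filter_upwards with t
      simp [slope_fun_def, Real.sinh_zero, div_eq_inv_mul]
    have hinv : Tendsto (fun t : ℝ => (Real.sinh t / t)⁻¹) (nhdsWithin 0 (Set.Ioi 0))
        (nhds 1) := by
      have := hsl.inv₀ one_ne_zero
      simpa using this
    have hcont : Tendsto (fun t : ℝ => (3 * Real.cosh t ^ 2 + 1) / (3 * Real.sqrt 3))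
        (nhdsWithin 0 (Set.Ioi 0)) (nhds (4 / (3 * Real.sqrt 3))) := by
      have hc : Continuous (fun t : ℝ => (3 * Real.cosh t ^ 2 + 1) / (3 * Real.sqrt 3)) := by
        continuity
      have := (hc.tendsto 0).mono_left (nhdsWithin_le_nhds (s := Set.Ioi (0:ℝ)))
      norm_num at this; exact this
    have hprod := hinv.mul hcont
    rw [one_mul] at hprod
    refine hprod.congr' ?_
    filter_upwards [self_mem_nhdsWithin] with t ht
    have ht0 : t ≠ 0 := ne_of_gt ht
    have hst : Real.sinh t ≠ 0 := ne_of_gt (Real.sinh_pos_iff.mpr ht)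
    have hd : (3:ℝ) * Real.cosh t ^ 2 + 1 ≠ 0 := by positivity
    field_simp
    ring

theorem dummy_lower_bound_asymptotics :
    Tendsto
      (fun x : ℝ => x ^ 2 * (π / (π - 6 * arcot (Real.sqrt 3 * Real.cosh (x / 4))) - 1))
      (nhdsWithin 0 (Set.Ioi 0)) (nhds (64 * π / (3 * Real.sqrt 3))) := by
  have hq : Tendsto (fun x : ℝ => x / 4) (nhdsWithin 0 (Set.Ioi 0))
      (nhdsWithin 0 (Set.Ioi 0)) := by
    rw [tendsto_nhdsWithin_iff]
    constructor
    · have : Tendsto (fun x : ℝ => x / 4) (nhds 0) (nhds (0 / 4)) :=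
        (continuous_id.div_const 4).tendsto 0
      simpa using this.mono_left (nhdsWithin_le_nhds (s := Set.Ioi (0:ℝ)))
    · filter_upwards [self_mem_nhdsWithin] with x hx
      exact div_pos (show (0:ℝ) < x from hx) (by norm_num)
  have h2 := key.comp hq
  have h3 := (h2.const_mul (16 * π)).sub x2tendsto
  have hval : 16 * π * (4 / (3 * Real.sqrt 3)) - 0 = 64 * π / (3 * Real.sqrt 3) := by ring
  rw [hval] at h3
  refine h3.congr' ?_
  filter_upwards [self_mem_nhdsWithin] with x hx
  have hD : 0 < Dfun (x / 4) := Dfun_pos (by simpa using div_pos hx (by norm_num : (0:ℝ) < 4))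
  have harc : π - 6 * arcot (Real.sqrt 3 * Real.cosh (x / 4)) = Dfun (x / 4) := by
    simp [arcot, Dfun, one_div]
  simp only [Function.comp]
  rw [harc]
  field_simp
  ring
end

section
/- For every integer g ≥ 2: √(4−2√2)·tanh(ς_g/8) < tanh(ς_g/4), where ς_g = 2·arcosh(1+2cos(π/(2g))). In fact √(4−2√2)·lim_{g→∞} tanh(ς_g/8) < tanh(ς₂/4), where the limit value of tanh(ς_g/8) is tanh(arcosh(3)/4). -/
open Real

/-- Inverse hyperbolic cosine on `[1, ∞)`. -/
noncomputable def arcosh (x : ℝ) : ℝ := Real.log (x + Real.sqrt (x ^ 2 - 1))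

/-!
Put `x = 1 + 2 cos (π / (2g))`; for `g ≥ 2` it lies in `[1 + √2, 3) ⊆ [5/3, 3)`.
Since `tanh` and `arcosh` are increasing, the left side is below
`tanh (arcosh 3 / 4) / cos (π / 8)` and the right side is at least `tanh (arcosh (5/3) / 2)`.
By `tanh (arcosh x / 2) = √(x² - 1) / (x + 1)` and `arcosh 3 = 2 arcosh √2`, these are
`(√2 - 1) / cos (π / 8) ≈ 0.448` and `1/2`.
-/

namespace Real

theorem tanh_strictMono : StrictMono tanh := fun a b hab =>
  (artanh_lt_artanh_iff ⟨neg_one_lt_tanh a, tanh_lt_one a⟩ ⟨neg_one_lt_tanh b, tanh_lt_one b⟩).mp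
    (by rwa [artanh_tanh, artanh_tanh])

theorem tanh_half (t : ℝ) : tanh (t / 2) = sinh t / (cosh t + 1) := by
  obtain ⟨u, rfl⟩ : ∃ u, t = 2 * u := ⟨t / 2, by ring⟩
  have hcosh : 0 < cosh u := cosh_pos u
  rw [mul_div_cancel_left₀ u two_ne_zero, sinh_two_mul, cosh_two_mul, tanh_eq_sinh_div_cosh,
    sinh_sq, div_eq_div_iff hcosh.ne' (by nlinarith)]
  ring

theorem tanh_arcosh_div_two {x : ℝ} (hx : 1 ≤ x) :
    tanh (arcosh x / 2) = √(x ^ 2 - 1) / (x + 1) := by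
  rw [tanh_half, sinh_arcosh hx, cosh_arcosh hx]

theorem arcosh_two_mul_sq_sub_one {x : ℝ} (hx : 1 ≤ x) :
    arcosh (2 * x ^ 2 - 1) = 2 * arcosh x := by
  have hcosh : cosh (2 * arcosh x) = 2 * x ^ 2 - 1 := by
    rw [cosh_two_mul, sinh_sq, cosh_arcosh hx]
    ring
  rw [← hcosh, arcosh_cosh (by linarith [arcosh_nonneg hx])]

theorem tanh_arcosh_five_thirds_div_two : tanh (arcosh (5 / 3) / 2) = 1 / 2 := by
  rw [tanh_arcosh_div_two (by norm_num), show (5 / 3 : ℝ) ^ 2 - 1 = (4 / 3) ^ 2 by norm_num,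
    sqrt_sq (by norm_num)]
  norm_num

theorem tanh_arcosh_three_div_four : tanh (arcosh 3 / 4) = 1 / (√2 + 1) := by
  have h1 : (1 : ℝ) ≤ √2 := one_le_sqrt.mpr one_le_two
  have h3 : (3 : ℝ) = 2 * √2 ^ 2 - 1 := by norm_num
  rw [h3, arcosh_two_mul_sq_sub_one h1, show 2 * arcosh √2 / 4 = arcosh √2 / 2 by ring,
    tanh_arcosh_div_two h1]
  norm_num

theorem one_div_sqrt_two_add_one_lt_cos_pi_div_eight_div_two :
    1 / (√2 + 1) < cos (π / 8) / 2 := by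
  have hr : √2 ^ 2 = 2 := sq_sqrt zero_le_two
  have hr7 : 7 / 5 < √2 := by nlinarith [sqrt_nonneg 2]
  have ht : √(2 + √2) ^ 2 = 2 + √2 := sq_sqrt (by positivity)
  have ht9 : 9 / 5 < √(2 + √2) := by nlinarith [sqrt_nonneg (2 + √2)]
  rw [cos_pi_div_eight, div_lt_iff₀ (by positivity)]
  nlinarith

theorem tanh_arcosh_div_four_div_cos_lt_tanh_arcosh_div_two {x : ℝ} (hx : 5 / 3 ≤ x)
    (hx' : x < 3) : tanh (arcosh x / 4) / cos (π / 8) < tanh (arcosh x / 2) := by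
  have hcos : 0 < cos (π / 8) := by rw [cos_pi_div_eight]; positivity
  have hleft : tanh (arcosh x / 4) < tanh (arcosh 3 / 4) :=
    tanh_strictMono (by linarith [(arcosh_lt_arcosh (by linarith) three_pos).mpr hx'])
  have hright : tanh (arcosh (5 / 3) / 2) ≤ tanh (arcosh x / 2) :=
    tanh_strictMono.monotone (by linarith [(arcosh_le_arcosh (by norm_num) (by linarith)).mpr hx])
  calc tanh (arcosh x / 4) / cos (π / 8) < tanh (arcosh 3 / 4) / cos (π / 8) :=
        div_lt_div_of_pos_right hleft hcos
    _ < 1 / 2 := by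
        rw [tanh_arcosh_three_div_four, div_lt_iff₀ hcos]
        linarith [one_div_sqrt_two_add_one_lt_cos_pi_div_eight_div_two]
    _ = tanh (arcosh (5 / 3) / 2) := tanh_arcosh_five_thirds_div_two.symm
    _ ≤ tanh (arcosh x / 2) := hright

theorem sqrt_two_div_two_le_cos_pi_div_two_mul {g : ℝ} (hg : 2 ≤ g) :
    √2 / 2 ≤ cos (π / (2 * g)) := by
  rw [← cos_pi_div_four]
  refine cos_le_cos_of_nonneg_of_le_pi (by positivity) (by linarith [pi_pos]) ?_
  exact div_le_div_of_nonneg_left pi_pos.le (by norm_num) (by linarith)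

theorem cos_pi_div_two_mul_lt_one {g : ℝ} (hg : 1 < g) : cos (π / (2 * g)) < 1 := by
  rw [← cos_zero]
  refine cos_lt_cos_of_nonneg_of_le_pi_div_two le_rfl ?_ (by positivity)
  exact div_le_div_of_nonneg_left pi_pos.le (by norm_num) (by linarith)

end Real

theorem circumradius_lt_quarter_systole (g : ℕ) (hg : 2 ≤ g) :
    Real.tanh (_root_.arcosh (1 + 2 * Real.cos (π / (2 * g))) / 4) / Real.cos (π / 8)
      < Real.tanh (_root_.arcosh (1 + 2 * Real.cos (π / (2 * g))) / 2) := by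
  have hg' : (2 : ℝ) ≤ g := by exact_mod_cast hg
  have hlow := sqrt_two_div_two_le_cos_pi_div_two_mul hg'
  have hup := cos_pi_div_two_mul_lt_one (by linarith : (1 : ℝ) < g)
  have hsqrt2 : 1 < √2 := one_lt_sqrt_two
  -- `_root_.arcosh` is definitionally Mathlib's `Real.arcosh`.
  exact tanh_arcosh_div_four_div_cos_lt_tanh_arcosh_div_two (by linarith) (by linarith)
end
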